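/- Let k ≥ 1, let Γ be a countable type, and let μ : Γ → ℝ^k satisfy μ(γ)_i ≥ 0 for all γ and i. Then for every u ∈ ℝ^k with u_i > 0 for all i, the growth indicator satisfies ψ_μ(u) ≤ (min_{1 ≤ i ≤ k} u_i) · δ_min and ψ_μ(u) ≤ (max_{1 ≤ i ≤ k} u_i) · δ_max, where δ_min is the abscissa of convergence of γ ↦ min_{1 ≤ i ≤ k} μ(γ)_i and δ_max is the abscissa of convergence of γ ↦ max_{1 ≤ i ≤ k} μ(γ)_i. -/

import Mathlib

open scoped ENNReal InnerProductSpace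

/-- The abscissa of convergence of a weight function `w : ι → ℝ`: the infimum in `[0,∞]`
of the set of `s ≥ 0` such that `∑ exp(-s · w i)` converges, and `∞` if this set is empty. -/
noncomputable def abscissa {ι : Type*} (w : ι → ℝ) : ℝ≥0∞ :=
  sInf {x : ℝ≥0∞ | ∃ s : ℝ, 0 ≤ s ∧ Summable (fun i => Real.exp (-s * w i)) ∧
    x = ENNReal.ofReal s}

/-- The growth indicator of a nonzero vector `v`, associated to `μ : Γ → ℝ^k`:
`ψ_μ(v) = ‖v‖ · inf { δ(w_C) | C an open cone containing v }`, where `w_C` is the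
restriction of `γ ↦ ‖μ γ‖` to `{γ | μ γ ∈ C}`. -/
noncomputable def growthIndicator {k : ℕ} {Γ : Type*} (μ : Γ → EuclideanSpace ℝ (Fin k))
    (v : EuclideanSpace ℝ (Fin k)) : ℝ≥0∞ :=
  ENNReal.ofReal ‖v‖ * sInf {x : ℝ≥0∞ | ∃ C : Set (EuclideanSpace ℝ (Fin k)),
    IsOpen C ∧ (∀ w ∈ C, ∀ c : ℝ, 0 < c → c • w ∈ C) ∧ v ∈ C ∧
    x = abscissa (fun γ : {γ : Γ // μ γ ∈ C} => ‖μ γ.1‖)}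

/-!
For `t > min_i uᵢ` the open cone `{v | ∃ i, vᵢ < (t/‖u‖)‖v‖}` contains `u`, and on it
`min_i μ(γ)ᵢ ≤ (t/‖u‖)‖μ(γ)‖`. Comparing the series `∑ exp(-s · w)` for these two weights gives
`ψ(u) ≤ ‖u‖ · (t/‖u‖) · δ_min = t · δ_min`, and `t ↓ min_i uᵢ` gives the first bound. The second is
the same argument with `t > max_i uᵢ` and the cone `{v | ∀ i, vᵢ < (t/‖u‖)‖v‖}`.
-/

open Filter Set

section Abscissa

variable {ι : Type*}

theorem abscissa_le_ofReal {w : ι → ℝ} {s : ℝ} (hs : 0 ≤ s)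
    (hsum : Summable fun i => Real.exp (-s * w i)) : abscissa w ≤ ENNReal.ofReal s :=
  sInf_le ⟨s, hs, hsum, rfl⟩

theorem abscissa_comp_subtype_le (w : ι → ℝ) (p : ι → Prop) :
    abscissa (fun i : Subtype p => w i) ≤ abscissa w :=
  sInf_le_sInf fun _ ⟨s, hs, hsum, hx⟩ => ⟨s, hs, hsum.subtype p, hx⟩

theorem abscissa_le_mul_of_le_mul {w w' : ι → ℝ} {a : ℝ} (ha : 0 < a)
    (h : ∀ i, w i ≤ a * w' i) : abscissa w' ≤ ENNReal.ofReal a * abscissa w := by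
  have ha₀ : ENNReal.ofReal a ≠ 0 := (ENNReal.ofReal_pos.2 ha).ne'
  rw [mul_comm, ← ENNReal.div_le_iff ha₀ ENNReal.ofReal_ne_top]
  refine le_sInf fun x ⟨s, hs, hsum, hx⟩ => ?_
  rw [ENNReal.div_le_iff ha₀ ENNReal.ofReal_ne_top, hx, ← ENNReal.ofReal_mul hs]
  refine abscissa_le_ofReal (by positivity) ?_
  refine hsum.of_nonneg_of_le (fun i => (Real.exp_pos _).le) fun i => Real.exp_le_exp.2 ?_
  nlinarith [mul_le_mul_of_nonneg_left (h i) hs]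

end Abscissa

theorem ENNReal.le_ofReal_mul_of_forall_lt {x A : ℝ≥0∞} {c : ℝ} (hc : 0 < c)
    (h : ∀ t, c < t → x ≤ ENNReal.ofReal t * A) : x ≤ ENNReal.ofReal c * A := by
  have hlim : Tendsto (fun t => ENNReal.ofReal t * A) (nhdsWithin c (Ioi c))
      (nhds (ENNReal.ofReal c * A)) :=
    ENNReal.Tendsto.mul_const
      (ENNReal.continuous_ofReal.continuousAt.tendsto.mono_left nhdsWithin_le_nhds)
      (Or.inl (ENNReal.ofReal_pos.2 hc).ne')
  exact ge_of_tendsto hlim (eventually_nhdsWithin_of_forall h)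

section Cone

variable {E : Type*} [NormedAddCommGroup E] [NormedSpace ℝ E]

def IsOpenCone (C : Set E) : Prop :=
  IsOpen C ∧ ∀ v ∈ C, ∀ c : ℝ, 0 < c → c • v ∈ C

theorem isOpenCone_setOf_lt_mul_norm (f : E →L[ℝ] ℝ) (b : ℝ) :
    IsOpenCone {v : E | f v < b * ‖v‖} := by
  refine ⟨isOpen_lt f.continuous (continuous_const.mul continuous_norm), fun v hv c hc => ?_⟩
  simp only [mem_ofPred_eq, map_smul, smul_eq_mul, norm_smul, Real.norm_of_nonneg hc.le]
  nlinarith [mul_lt_mul_of_pos_left hv hc]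

theorem IsOpenCone.iUnion {ι : Sort*} {C : ι → Set E} (h : ∀ i, IsOpenCone (C i)) :
    IsOpenCone (⋃ i, C i) := by
  refine ⟨isOpen_iUnion fun i => (h i).1, fun v hv c hc => ?_⟩
  obtain ⟨i, hi⟩ := mem_iUnion.1 hv
  exact mem_iUnion.2 ⟨i, (h i).2 v hi c hc⟩

theorem IsOpenCone.iInter {ι : Sort*} [Finite ι] {C : ι → Set E} (h : ∀ i, IsOpenCone (C i)) :
    IsOpenCone (⋂ i, C i) :=
  ⟨isOpen_iInter_of_finite fun i => (h i).1,
    fun v hv c hc => mem_iInter.2 fun i => (h i).2 v (mem_iInter.1 hv i) c hc⟩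

end Cone

section GrowthIndicator

variable {k : ℕ} {Γ : Type*} {μ : Γ → EuclideanSpace ℝ (Fin k)} {v : EuclideanSpace ℝ (Fin k)}

theorem growthIndicator_le_of_isOpenCone {C : Set (EuclideanSpace ℝ (Fin k))}
    (hC : IsOpenCone C) (hv : v ∈ C) :
    growthIndicator μ v ≤
      ENNReal.ofReal ‖v‖ * abscissa (fun γ : {γ : Γ // μ γ ∈ C} => ‖μ γ.1‖) := by
  unfold growthIndicator
  gcongr
  exact sInf_le ⟨C, hC.1, hC.2, hv, rfl⟩

theorem growthIndicator_le_of_le_mul_norm {C : Set (EuclideanSpace ℝ (Fin k))}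
    (hC : IsOpenCone C) (hv : v ∈ C) {w : Γ → ℝ} {b : ℝ} (hb : 0 < b)
    (hw : ∀ γ, μ γ ∈ C → w γ ≤ b * ‖μ γ‖) :
    growthIndicator μ v ≤ ENNReal.ofReal (‖v‖ * b) * abscissa w :=
  calc growthIndicator μ v
      ≤ ENNReal.ofReal ‖v‖ * abscissa (fun γ : {γ : Γ // μ γ ∈ C} => ‖μ γ.1‖) :=
        growthIndicator_le_of_isOpenCone hC hv
    _ ≤ ENNReal.ofReal ‖v‖ * (ENNReal.ofReal b * abscissa w) := by
        gcongr
        exact (abscissa_le_mul_of_le_mul (w := fun γ : {γ : Γ // μ γ ∈ C} => w γ) hb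
          fun γ => hw γ γ.2).trans
          (mul_le_mul_right (abscissa_comp_subtype_le w _) _)
    _ = ENNReal.ofReal (‖v‖ * b) * abscissa w := by
        rw [ENNReal.ofReal_mul (norm_nonneg v), mul_assoc]

variable [Nonempty (Fin k)]

theorem norm_pos_of_forall_pos (hv : ∀ i, 0 < v i) : 0 < ‖v‖ :=
  norm_pos_iff.2 fun h => (hv (Classical.arbitrary _)).ne' (by simp [h])

theorem growthIndicator_le_iInf_mul_abscissa (hv : ∀ i, 0 < v i) :
    growthIndicator μ v ≤
      ENNReal.ofReal (⨅ i, v i) * abscissa (fun γ => ⨅ i, μ γ i) := by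
  obtain ⟨i₀, hi₀⟩ := exists_eq_ciInf_of_finite (f := fun i => v i)
  have hv₀ := norm_pos_of_forall_pos hv
  refine ENNReal.le_ofReal_mul_of_forall_lt (hi₀ ▸ hv i₀) fun t ht => ?_
  obtain ⟨i, hi⟩ := exists_lt_of_ciInf_lt ht
  have hb : 0 < t / ‖v‖ := div_pos ((hi₀ ▸ hv i₀).trans ht) hv₀
  convert growthIndicator_le_of_le_mul_norm
    (IsOpenCone.iUnion fun i => isOpenCone_setOf_lt_mul_norm (EuclideanSpace.proj i) (t / ‖v‖))
    (mem_iUnion.2 ⟨i, ?_⟩) hb fun γ hγ => ?_ using 2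
  · field_simp
  · simpa [div_mul_cancel₀ t hv₀.ne'] using hi
  · obtain ⟨j, hj⟩ := mem_iUnion.1 hγ
    exact (ciInf_le (Finite.bddBelow_range _) j).trans (le_of_lt hj)

theorem growthIndicator_le_iSup_mul_abscissa (hv : ∀ i, 0 < v i) :
    growthIndicator μ v ≤
      ENNReal.ofReal (⨆ i, v i) * abscissa (fun γ => ⨆ i, μ γ i) := by
  have hv₀ := norm_pos_of_forall_pos hv
  have hM : 0 < ⨆ i, v i :=
    (hv (Classical.arbitrary _)).trans_le (le_ciSup (Finite.bddAbove_range _) _)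
  refine ENNReal.le_ofReal_mul_of_forall_lt hM fun t ht => ?_
  convert growthIndicator_le_of_le_mul_norm
    (IsOpenCone.iInter fun i => isOpenCone_setOf_lt_mul_norm (EuclideanSpace.proj i) (t / ‖v‖))
    (mem_iInter.2 fun i => ?_) (div_pos (hM.trans ht) hv₀) fun γ hγ => ?_ using 2
  · field_simp
  · simpa [div_mul_cancel₀ t hv₀.ne'] using (le_ciSup (Finite.bddAbove_range _) i).trans_lt ht
  · exact ciSup_le fun j => le_of_lt (mem_iInter.1 hγ j)

end GrowthIndicator

theorem stmt2_general (k : ℕ) (hk : 1 ≤ k) (Γ : Type*)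
    (μ : Γ → EuclideanSpace ℝ (Fin k))
    (u : EuclideanSpace ℝ (Fin k)) (hu : ∀ i, 0 < u i) :
    growthIndicator μ u ≤
      ENNReal.ofReal (⨅ i : Fin k, u i) * abscissa (fun γ => ⨅ i : Fin k, μ γ i) ∧
    growthIndicator μ u ≤
      ENNReal.ofReal (⨆ i : Fin k, u i) * abscissa (fun γ => ⨆ i : Fin k, μ γ i) :=
  have : Nonempty (Fin k) := ⟨⟨0, hk⟩⟩
  ⟨growthIndicator_le_iInf_mul_abscissa hu, growthIndicator_le_iSup_mul_abscissa hu⟩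

/-- The growth indicator is bounded by `(min_i uᵢ) · δ_min` and by `(max_i uᵢ) · δ_max`,
where `δ_min`, `δ_max` are the abscissas of convergence of the minimum and maximum of
the coordinates of the Cartan projection. -/
theorem stmt2 (k : ℕ) (hk : 1 ≤ k) (Γ : Type*) [Countable Γ]
    (μ : Γ → EuclideanSpace ℝ (Fin k)) (hμ : ∀ γ i, 0 ≤ μ γ i)
    (u : EuclideanSpace ℝ (Fin k)) (hu : ∀ i, 0 < u i) :
    growthIndicator μ u ≤
      ENNReal.ofReal (⨅ i : Fin k, u i) * abscissa (fun γ => ⨅ i : Fin k, μ γ i) ∧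
    growthIndicator μ u ≤
      ENNReal.ofReal (⨆ i : Fin k, u i) * abscissa (fun γ => ⨆ i : Fin k, μ γ i) :=
  stmt2_general k hk Γ μ u hu
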